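/- arXiv:2010.05505 — 2 statements merged into one kernel-verified Lean document; each statement's English description precedes it below -/
import Mathlib

section
/- Let 0 < q < 1 and let z be real with 0 ≤ z < 1. For all integers m ≥ 0 and n ≥ 1, one has ∑_{a > m} (1/[a])·C_q^{(1)}(a,n;z) = q^{(m+1)n}·[m]! [n−1]!/[m+n]! · φ_q(q^{m+1}, q^n; q^{m+n+1}; z), where the sum is over integers a > m. -/
/-- The q-integer [m] = (1 − q^m)/(1 − q). -/
noncomputable def qInt (q : ℝ) (m : ℕ) : ℝ := (1 - q ^ m) / (1 - q)

/-- The q-factorial [m]! = [1][2]⋯[m]. -/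
noncomputable def qFact (q : ℝ) (m : ℕ) : ℝ := ∏ i ∈ Finset.range m, qInt q (i + 1)

/-- The q-shifted factorial (a;q)_n = (1−a)(1−qa)⋯(1−q^{n−1}a). -/
noncomputable def qPoch (q a : ℝ) (n : ℕ) : ℝ := ∏ i ∈ Finset.range n, (1 - q ^ i * a)

/-- The q-hypergeometric series φ_q(α,β;γ;z) = ∑_{n≥0} (α;q)_n (β;q)_n / ((γ;q)_n (q;q)_n) · zⁿ. -/
noncomputable def qHyp (q α β γ z : ℝ) : ℝ :=
  ∑' n : ℕ, qPoch q α n * qPoch q β n / (qPoch q γ n * qPoch q q n) * z ^ n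

/-- The first q-connector C_q^{(1)}(m,n;z) = q^{mn} [m]![n]!/[m+n]! · φ_q(q^m,q^n;q^{m+n+1};z). -/
noncomputable def Cq1 (q : ℝ) (m n : ℕ) (z : ℝ) : ℝ :=
  q ^ (m * n) * (qFact q m * qFact q n / qFact q (m + n)) *
    qHyp q (q ^ m) (q ^ n) (q ^ (m + n + 1)) z

lemma powlt {q : ℝ} (hq0 : 0 < q) (hq1 : q < 1) {j : ℕ} (hj : 1 ≤ j) : q ^ j < 1 :=
  pow_lt_one₀ hq0.le hq1 (by omega)

lemma qPoch_pos {q : ℝ} (hq0 : 0 < q) (hq1 : q < 1) {b : ℕ} (hb : 1 ≤ b) (k : ℕ) :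
    0 < qPoch q (q ^ b) k := by
  refine Finset.prod_pos fun i _ => ?_
  have h1 : q ^ i * q ^ b = q ^ (i + b) := (pow_add q i b).symm
  have h2 := powlt hq0 hq1 (j := i + b) (by omega)
  rw [h1]; linarith

lemma qPochq_pos {q : ℝ} (hq0 : 0 < q) (hq1 : q < 1) (k : ℕ) : 0 < qPoch q q k := by
  have := qPoch_pos hq0 hq1 (b := 1) le_rfl k
  simpa using this


lemma qPoch_succ' (q α : ℝ) (n : ℕ) : qPoch q α (n + 1) = qPoch q α n * (1 - q ^ n * α) := by
  rw [qPoch, Finset.prod_range_succ, ← qPoch]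

lemma qPoch_shift (q : ℝ) (b k : ℕ) :
    qPoch q q (b + k) = qPoch q q b * qPoch q (q ^ (b + 1)) k := by
  induction k with
  | zero => simp [qPoch]
  | succ k ih =>
      rw [show b + (k+1) = (b+k)+1 by ring, qPoch_succ', ih, qPoch_succ']
      have : q ^ (b + k) * q = q ^ k * q ^ (b + 1) := by
        rw [← pow_succ, ← pow_add]; ring_nf
      rw [this]; ring

lemma qFact_mul {q : ℝ} (hq1 : q < 1) (a : ℕ) : qFact q a * (1 - q) ^ a = qPoch q q a := by
  have h1 : (1:ℝ) - q ≠ 0 := by intro h; nlinarith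
  induction a with
  | zero => simp [qFact, qPoch]
  | succ a ih =>
      rw [qFact, Finset.prod_range_succ, ← qFact, qPoch_succ', ← ih, qInt]
      have h2 : q ^ a * q = q ^ (a + 1) := (pow_succ q a)
      rw [pow_succ]
      field_simp
      ring

lemma qPoch_succ_left (q : ℝ) (b n : ℕ) :
    qPoch q (q ^ b) (n + 1) = (1 - q ^ b) * qPoch q (q ^ (b + 1)) n := by
  simp only [qPoch]
  rw [Finset.prod_range_succ']
  simp only [pow_zero, one_mul]
  rw [mul_comm]
  congr 1
  apply Finset.prod_congr rfl
  intro i _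
  rw [← pow_add, ← pow_add]
  ring_nf

noncomputable def auxF (q : ℝ) (n k a : ℕ) : ℝ := q ^ (a * n) / qPoch q (q ^ (a + k)) n

lemma tel {q : ℝ} (hq0 : 0 < q) (hq1 : q < 1) (n k b : ℕ) :
    auxF q n k (b + 1) - auxF q n k (b + 2)
      = q ^ ((b + 1) * n) * (1 - q ^ n) / qPoch q (q ^ (b + 1 + k)) (n + 1) := by
  set a := b + 1 with ha
  have hD1 : 0 < qPoch q (q ^ (a + k)) n := qPoch_pos hq0 hq1 (by omega) n
  have hD2 : 0 < qPoch q (q ^ (a + k + 1)) n := qPoch_pos hq0 hq1 (by omega) n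
  have hE : qPoch q (q ^ (a + k)) n * (1 - q ^ n * q ^ (a + k))
      = (1 - q ^ (a + k)) * qPoch q (q ^ (a + k + 1)) n := by
    rw [← qPoch_succ', qPoch_succ_left]
  have hnz : (1 : ℝ) - q ^ n * q ^ (a + k) > 0 := by
    have : q ^ n * q ^ (a + k) = q ^ (n + (a + k)) := (pow_add q n (a+k)).symm
    have h2 := powlt hq0 hq1 (j := n + (a + k)) (by omega)
    rw [this]; linarith
  rw [qPoch_succ']
  rw [auxF, auxF, show a + 1 + k = a + k + 1 by ring, div_sub_div _ _ hD1.ne' hD2.ne',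
    div_eq_div_iff (by positivity) (by positivity)]
  linear_combination (-(q ^ (a * n)) * qPoch q (q ^ (a + k)) n * q ^ n) * hE

lemma key {q : ℝ} (hq0 : 0 < q) (hq1 : q < 1) (z : ℝ) (b p k : ℕ) :
    1 / qInt q (b + 1) *
      (q ^ ((b + 1) * (p + 1)) *
        (qFact q (b + 1) * qFact q (p + 1) / qFact q (b + 1 + (p + 1))) *
        (qPoch q (q ^ (b + 1)) k * qPoch q (q ^ (p + 1)) k /
          (qPoch q (q ^ (b + 1 + (p + 1) + 1)) k * qPoch q q k) * z ^ k))
      = ((1 - q) * qPoch q q p * qPoch q (q ^ (p + 1)) k * z ^ k / qPoch q q k) *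
        (auxF q (p + 1) k (b + 1) - auxF q (p + 1) k (b + 2)) := by
  rw [tel hq0 hq1]
  have hq : (1:ℝ) - q ≠ 0 := by intro h; nlinarith
  have hB : qPoch q q b ≠ 0 := (qPochq_pos hq0 hq1 b).ne'
  have hPp : qPoch q q p ≠ 0 := (qPochq_pos hq0 hq1 p).ne'
  have hBK : qPoch q q (b + k) ≠ 0 := (qPochq_pos hq0 hq1 _).ne'
  have hAN : qPoch q q (b + 1 + (p + 1)) ≠ 0 := (qPochq_pos hq0 hq1 _).ne'
  have hANK : qPoch q q (b + 1 + (p + 1) + k) ≠ 0 := (qPochq_pos hq0 hq1 _).ne'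
  have hK : qPoch q q k ≠ 0 := (qPochq_pos hq0 hq1 k).ne'
  have ha : (1:ℝ) - q ^ (b + 1) ≠ 0 := by
    have := powlt hq0 hq1 (j := b + 1) (by omega); intro h; nlinarith
  have e1 : qFact q (b + 1) = qPoch q q b * (1 - q ^ b * q) / (1 - q) ^ (b + 1) := by
    rw [eq_div_iff (pow_ne_zero _ hq), ← qPoch_succ', qFact_mul hq1]
  have e2 : qFact q (p + 1) = qPoch q q p * (1 - q ^ p * q) / (1 - q) ^ (p + 1) := by
    rw [eq_div_iff (pow_ne_zero _ hq), ← qPoch_succ', qFact_mul hq1]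
  have e3 : qFact q (b + 1 + (p + 1)) = qPoch q q (b + 1 + (p + 1)) / (1 - q) ^ (b + 1 + (p + 1)) := by
    rw [eq_div_iff (pow_ne_zero _ hq), qFact_mul hq1]
  have e4 : qPoch q (q ^ (b + 1)) k = qPoch q q (b + k) / qPoch q q b := by
    rw [eq_div_iff hB, mul_comm, ← qPoch_shift]
  have e5 : qPoch q (q ^ (b + 1 + (p + 1) + 1)) k
      = qPoch q q (b + 1 + (p + 1) + k) / qPoch q q (b + 1 + (p + 1)) := by
    rw [eq_div_iff hAN, mul_comm, ← qPoch_shift]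
  have e6 : qPoch q (q ^ (b + 1 + k)) (p + 1 + 1)
      = qPoch q q (b + 1 + (p + 1) + k) / qPoch q q (b + k) := by
    rw [eq_div_iff hBK, mul_comm, show b + 1 + k = (b + k) + 1 by ring, ← qPoch_shift]
    congr 1; ring
  have e7 : qInt q (b + 1) = (1 - q ^ (b + 1)) / (1 - q) := rfl
  rw [e1, e2, e3, e4, e5, e6, e7]
  field_simp
  ring

lemma key2 {q : ℝ} (hq0 : 0 < q) (hq1 : q < 1) (z : ℝ) (m p k : ℕ) :
    q ^ ((m + 1) * (p + 1)) * (qFact q m * qFact q p / qFact q (m + (p + 1))) *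
      (qPoch q (q ^ (m + 1)) k * qPoch q (q ^ (p + 1)) k /
        (qPoch q (q ^ (m + (p + 1) + 1)) k * qPoch q q k) * z ^ k)
      = ((1 - q) * qPoch q q p * qPoch q (q ^ (p + 1)) k * z ^ k / qPoch q q k) *
        auxF q (p + 1) k (m + 1) := by
  have hq : (1:ℝ) - q ≠ 0 := by intro h; nlinarith
  have hM : qPoch q q m ≠ 0 := (qPochq_pos hq0 hq1 m).ne'
  have hMK : qPoch q q (m + k) ≠ 0 := (qPochq_pos hq0 hq1 _).ne'
  have hMN : qPoch q q (m + (p + 1)) ≠ 0 := (qPochq_pos hq0 hq1 _).ne'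
  have hMNK : qPoch q q (m + (p + 1) + k) ≠ 0 := (qPochq_pos hq0 hq1 _).ne'
  have hK : qPoch q q k ≠ 0 := (qPochq_pos hq0 hq1 k).ne'
  have e1 : qFact q m = qPoch q q m / (1 - q) ^ m := by
    rw [eq_div_iff (pow_ne_zero _ hq), qFact_mul hq1]
  have e2 : qFact q p = qPoch q q p / (1 - q) ^ p := by
    rw [eq_div_iff (pow_ne_zero _ hq), qFact_mul hq1]
  have e3 : qFact q (m + (p + 1)) = qPoch q q (m + (p + 1)) / (1 - q) ^ (m + (p + 1)) := by
    rw [eq_div_iff (pow_ne_zero _ hq), qFact_mul hq1]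
  have e4 : qPoch q (q ^ (m + 1)) k = qPoch q q (m + k) / qPoch q q m := by
    rw [eq_div_iff hM, mul_comm, ← qPoch_shift]
  have e5 : qPoch q (q ^ (m + (p + 1) + 1)) k
      = qPoch q q (m + (p + 1) + k) / qPoch q q (m + (p + 1)) := by
    rw [eq_div_iff hMN, mul_comm, ← qPoch_shift]
  have e6 : qPoch q (q ^ (m + 1 + k)) (p + 1)
      = qPoch q q (m + (p + 1) + k) / qPoch q q (m + k) := by
    rw [eq_div_iff hMK, mul_comm, show m + 1 + k = (m + k) + 1 by ring, ← qPoch_shift]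
    congr 1; ring
  rw [auxF, e1, e2, e3, e4, e5, e6]
  field_simp
  ring

open Filter in
lemma summable_aux {q z : ℝ} (hq0 : 0 < q) (hq1 : q < 1) (hz0 : 0 ≤ z) (hz1 : z < 1)
    (d : ℕ → ℝ) (hd0 : ∀ k, 0 ≤ d k) (hd : ∀ k, d (k + 1) * (1 - q ^ (k + 1)) ≤ d k) :
    Summable (fun k => d k * z ^ k) := by
  apply summable_of_ratio_norm_eventually_le (r := (1 + z) / 2) (by linarith)
  have hε : (0:ℝ) < (1 - z) / (1 + z) := div_pos (by linarith) (by linarith)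
  have htend : Tendsto (fun k : ℕ => q ^ (k + 1)) atTop (nhds 0) :=
    (tendsto_pow_atTop_nhds_zero_of_lt_one hq0.le hq1).comp (tendsto_add_atTop_nat 1)
  filter_upwards [htend.eventually (gt_mem_nhds hε)] with k hk
  have hQ1 : q ^ (k + 1) * (1 + z) < 1 - z := by
    have := (lt_div_iff₀ (show (0:ℝ) < 1 + z by linarith)).mp hk
    linarith
  have hQ0 : 0 < q ^ (k + 1) := by positivity
  have ht : (0:ℝ) ≤ z ^ k := pow_nonneg hz0 k
  rw [Real.norm_eq_abs, Real.norm_eq_abs,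
    abs_of_nonneg (mul_nonneg (hd0 _) (pow_nonneg hz0 _)),
    abs_of_nonneg (mul_nonneg (hd0 _) (pow_nonneg hz0 _))]
  have h2 : d (k + 1) * (1 - q ^ (k + 1)) * (z ^ k * z) ≤ d k * (z ^ k * z) :=
    mul_le_mul_of_nonneg_right (hd k) (mul_nonneg ht hz0)
  have h3 : 0 ≤ d (k + 1) * z ^ k := mul_nonneg (hd0 _) ht
  have h4 : 0 ≤ d (k + 1) * (z ^ k * z) := mul_nonneg (hd0 _) (mul_nonneg ht hz0)
  have hzk1 : z ^ (k + 1) = z ^ k * z := pow_succ z k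
  rw [hzk1]
  nlinarith [mul_le_mul_of_nonneg_right (hd k) (mul_nonneg ht (show (0:ℝ) ≤ 1 + z by linarith)),
    mul_le_mul_of_nonneg_left hQ1.le h3]

lemma qPoch_le_one {q : ℝ} (hq0 : 0 < q) (hq1 : q < 1) {b : ℕ} (hb : 1 ≤ b) (k : ℕ) :
    qPoch q (q ^ b) k ≤ 1 := by
  apply Finset.prod_le_one
  · intro i _
    have h1 : q ^ i * q ^ b = q ^ (i + b) := (pow_add q i b).symm
    have h2 := powlt hq0 hq1 (j := i + b) (by omega)
    rw [h1]; linarith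
  · intro i _
    have : 0 < q ^ i * q ^ b := by positivity
    linarith

lemma qPoch_mono_base {q : ℝ} (hq0 : 0 < q) (hq1 : q < 1) {b : ℕ} (hb : 1 ≤ b) (n : ℕ) :
    qPoch q (q ^ b) n ≤ qPoch q (q ^ (b + 1)) n := by
  apply Finset.prod_le_prod
  · intro i _
    have h1 : q ^ i * q ^ b = q ^ (i + b) := (pow_add q i b).symm
    have h2 := powlt hq0 hq1 (j := i + b) (by omega)
    rw [h1]; linarith
  · intro i _
    have : q ^ (b + 1) ≤ q ^ b := pow_le_pow_of_le_one hq0.le hq1.le (by omega)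
    have h3 : 0 ≤ q ^ i := by positivity
    nlinarith

lemma qPoch_ge {q : ℝ} (hq0 : 0 < q) (hq1 : q < 1) {b : ℕ} (hb : 1 ≤ b) (n : ℕ) :
    (1 - q) ^ n ≤ qPoch q (q ^ b) n := by
  rw [qPoch, show (1 - q) ^ n = ∏ _i ∈ Finset.range n, (1 - q) from by
    rw [Finset.prod_const, Finset.card_range]]
  apply Finset.prod_le_prod
  · intro i _; linarith
  · intro i _
    have h1 : q ^ i * q ^ b = q ^ (i + b) := (pow_add q i b).symm
    have h2 : q ^ (i + b) ≤ q ^ 1 := pow_le_pow_of_le_one hq0.le hq1.le (by omega)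
    rw [h1]; simp only [pow_one] at h2; linarith

lemma frac_step (A N1 N2 K1 K2 D1 D2 w : ℝ) (hA : 0 ≤ A) (hK1 : 0 < K1) (hK2 : 0 < K2)
    (hD1 : 0 < D1) (hD2 : 0 < D2) (h : N2 * w * (K1 * D1) ≤ N1 * (K2 * D2)) :
    A * N2 / (K2 * D2) * w ≤ A * N1 / (K1 * D1) := by
  rw [show A * N2 / (K2 * D2) * w = A * (N2 * w) / (K2 * D2) by ring,
    div_le_div_iff₀ (by positivity) (by positivity)]
  calc A * (N2 * w) * (K1 * D1) = A * (N2 * w * (K1 * D1)) := by ring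
    _ ≤ A * (N1 * (K2 * D2)) := mul_le_mul_of_nonneg_left h hA
    _ = A * N1 * (K2 * D2) := by ring

lemma qPochq_succ {q : ℝ} (k : ℕ) : qPoch q q (k + 1) = qPoch q q k * (1 - q ^ (k + 1)) := by
  rw [qPoch_succ', pow_succ]

lemma frac_step2 (A N1 N2 K1 K2 w : ℝ) (hA : 0 ≤ A) (hK1 : 0 < K1) (hK2 : 0 < K2)
    (h : N2 * w * K1 ≤ N1 * K2) :
    A * N2 / K2 * w ≤ A * N1 / K1 := by
  rw [show A * N2 / K2 * w = A * (N2 * w) / K2 by ring, div_le_div_iff₀ hK2 hK1]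
  calc A * (N2 * w) * K1 = A * (N2 * w * K1) := by ring
    _ ≤ A * (N1 * K2) := mul_le_mul_of_nonneg_left h hA
    _ = A * N1 * K2 := by ring

lemma N_antitone {q : ℝ} (hq0 : 0 < q) (hq1 : q < 1) (p k : ℕ) :
    qPoch q (q ^ (p + 1)) (k + 1) ≤ qPoch q (q ^ (p + 1)) k := by
  rw [qPoch_succ']
  have hN := qPoch_pos hq0 hq1 (b := p + 1) (by omega) k
  have h2 : (0:ℝ) ≤ q ^ k * q ^ (p + 1) := by positivity
  nlinarith

lemma summable_c {q z : ℝ} (hq0 : 0 < q) (hq1 : q < 1) (hz0 : 0 ≤ z) (hz1 : z < 1) (p : ℕ) :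
    Summable (fun k => (1 - q) * qPoch q q p * qPoch q (q ^ (p + 1)) k * z ^ k / qPoch q q k) := by
  set A : ℝ := (1 - q) * qPoch q q p with hA
  have hA0 : 0 ≤ A := by
    have h := qPochq_pos hq0 hq1 p
    rw [hA]; apply mul_nonneg (by linarith) h.le
  have hd0 : ∀ k, 0 ≤ A * qPoch q (q ^ (p + 1)) k / qPoch q q k := by
    intro k
    have h1 := qPoch_pos hq0 hq1 (b := p + 1) (by omega) k
    have h2 := qPochq_pos hq0 hq1 k
    positivity
  have hd : ∀ k, (fun k => A * qPoch q (q ^ (p + 1)) k / qPoch q q k) (k + 1) * (1 - q ^ (k + 1))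
      ≤ (fun k => A * qPoch q (q ^ (p + 1)) k / qPoch q q k) k := by
    intro k
    dsimp only
    have hK1 := qPochq_pos hq0 hq1 k
    have hK2 := qPochq_pos hq0 hq1 (k + 1)
    apply frac_step2 _ _ _ _ _ _ hA0 hK1 hK2
    rw [qPochq_succ]
    have h1 := N_antitone hq0 hq1 p k
    have h2 := qPoch_pos hq0 hq1 (b := p + 1) (by omega) k
    have hw : (0:ℝ) < 1 - q ^ (k + 1) := by
      have := powlt hq0 hq1 (j := k + 1) (by omega); linarith
    nlinarith [mul_le_mul_of_nonneg_left h1 (mul_nonneg hw.le hK1.le)]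
  apply (summable_aux hq0 hq1 hz0 hz1 _ hd0 hd).congr
  intro k
  ring

lemma summable_cF {q z : ℝ} (hq0 : 0 < q) (hq1 : q < 1) (hz0 : 0 ≤ z) (hz1 : z < 1)
    (p a : ℕ) (ha : 1 ≤ a) :
    Summable (fun k => (1 - q) * qPoch q q p * qPoch q (q ^ (p + 1)) k * z ^ k / qPoch q q k *
      auxF q (p + 1) k a) := by
  set A : ℝ := (1 - q) * qPoch q q p * q ^ (a * (p + 1)) with hA
  have hA0 : 0 ≤ A := by
    have h := qPochq_pos hq0 hq1 p
    rw [hA]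
    apply mul_nonneg (mul_nonneg (by linarith) h.le) (pow_nonneg hq0.le _)
  set d : ℕ → ℝ := fun k =>
    A * qPoch q (q ^ (p + 1)) k / (qPoch q q k * qPoch q (q ^ (a + k)) (p + 1)) with hdDef
  have hd0 : ∀ k, 0 ≤ d k := by
    intro k
    have h1 := qPoch_pos hq0 hq1 (b := p + 1) (by omega) k
    have h2 := qPochq_pos hq0 hq1 k
    have h3 := qPoch_pos hq0 hq1 (b := a + k) (by omega) (p + 1)
    positivity
  have hd : ∀ k, d (k + 1) * (1 - q ^ (k + 1)) ≤ d k := by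
    intro k
    have hK1 := qPochq_pos hq0 hq1 k
    have hK2 := qPochq_pos hq0 hq1 (k + 1)
    have hD1 := qPoch_pos hq0 hq1 (b := a + k) (by omega) (p + 1)
    have hD2 := qPoch_pos hq0 hq1 (b := a + (k + 1)) (by omega) (p + 1)
    have hN1 := qPoch_pos hq0 hq1 (b := p + 1) (by omega) k
    have hw : (0:ℝ) < 1 - q ^ (k + 1) := by
      have := powlt hq0 hq1 (j := k + 1) (by omega); linarith
    rw [hdDef]
    dsimp only
    apply frac_step _ _ _ _ _ _ _ _ hA0 hK1 hK2 hD1 hD2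
    have hNle := N_antitone hq0 hq1 p k
    have hDle : qPoch q (q ^ (a + k)) (p + 1) ≤ qPoch q (q ^ (a + (k + 1))) (p + 1) := by
      rw [show a + (k + 1) = (a + k) + 1 by ring]
      exact qPoch_mono_base hq0 hq1 (by omega) (p + 1)
    have hprod : qPoch q (q ^ (p + 1)) (k + 1) * qPoch q (q ^ (a + k)) (p + 1)
        ≤ qPoch q (q ^ (p + 1)) k * qPoch q (q ^ (a + (k + 1))) (p + 1) :=
      mul_le_mul hNle hDle hD1.le hN1.le
    rw [qPochq_succ]
    nlinarith [mul_le_mul_of_nonneg_left hprod (mul_nonneg hw.le hK1.le)]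
  apply (summable_aux hq0 hq1 hz0 hz1 _ hd0 hd).congr
  intro k
  rw [hdDef, auxF]
  dsimp only
  ring


open Filter

/-- ∑_{a>m} (1/[a])·C_q^{(1)}(a,n;z)
  = q^{(m+1)n}·[m]![n−1]!/[m+n]!·φ_q(q^{m+1},q^n;q^{m+n+1};z) for n ≥ 1. -/
theorem q_connector_sum_eval' (q : ℝ) (hq0 : 0 < q) (hq1 : q < 1)
    (z : ℝ) (hz0 : 0 ≤ z) (hz1 : z < 1) (m n : ℕ) (hn : 1 ≤ n) :
    ∑' a : {a : ℕ // m < a}, 1 / qInt q a * Cq1 q a n z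
      = q ^ ((m + 1) * n) * (qFact q m * qFact q (n - 1) / qFact q (m + n)) *
        qHyp q (q ^ (m + 1)) (q ^ n) (q ^ (m + n + 1)) z := by
  obtain ⟨p, rfl⟩ : ∃ p, n = p + 1 := ⟨n - 1, by omega⟩
  simp only [Nat.add_sub_cancel]
  set G : ℕ → ℝ := fun a => ∑' k, (1 - q) * qPoch q q p * qPoch q (q ^ (p + 1)) k * z ^ k /
    qPoch q q k * auxF q (p + 1) k a with hGdef
  have hcnn : ∀ k : ℕ,
      0 ≤ (1 - q) * qPoch q q p * qPoch q (q ^ (p + 1)) k * z ^ k / qPoch q q k := by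
    intro k
    have h1 := qPochq_pos hq0 hq1 p
    have h2 := qPoch_pos hq0 hq1 (b := p + 1) (by omega) k
    have h3 := qPochq_pos hq0 hq1 k
    apply div_nonneg _ h3.le
    exact mul_nonneg (mul_nonneg (mul_nonneg (by linarith) h1.le) h2.le) (pow_nonneg hz0 k)
  -- each term of the sum is a difference of consecutive G values
  have hterm : ∀ b : ℕ,
      1 / qInt q (b + 1) * Cq1 q (b + 1) (p + 1) z = G (b + 1) - G (b + 2) := by
    intro b
    rw [Cq1, qHyp, ← tsum_mul_left, ← tsum_mul_left,
      tsum_congr (fun k => key hq0 hq1 z b p k)]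
    simp only [mul_sub]
    rw [Summable.tsum_sub (summable_cF hq0 hq1 hz0 hz1 p (b + 1) (by omega))
      (summable_cF hq0 hq1 hz0 hz1 p (b + 2) (by omega))]
  -- nonnegativity of the differences
  have hdiff : ∀ b : ℕ, 0 ≤ G (b + 1) - G (b + 2) := by
    intro b
    simp only [hGdef]
    rw [← Summable.tsum_sub (summable_cF hq0 hq1 hz0 hz1 p (b + 1) (by omega))
      (summable_cF hq0 hq1 hz0 hz1 p (b + 2) (by omega))]
    apply tsum_nonneg
    intro k
    rw [← mul_sub, tel hq0 hq1]
    have h4 := qPoch_pos hq0 hq1 (b := b + 1 + k) (by omega) (p + 1 + 1)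
    have h5 := powlt hq0 hq1 (j := p + 1) (by omega)
    apply mul_nonneg (hcnn k)
    apply div_nonneg _ h4.le
    exact mul_nonneg (by positivity) (by linarith)
  -- G is nonnegative
  have hGnonneg : ∀ a : ℕ, 1 ≤ a → 0 ≤ G a := by
    intro a ha
    apply tsum_nonneg
    intro k
    have h4 := qPoch_pos hq0 hq1 (b := a + k) (by omega) (p + 1)
    apply mul_nonneg (hcnn k)
    rw [auxF]
    exact div_nonneg (by positivity) h4.le
  -- upper bound for G and tendsto 0
  have hGle : ∀ a : ℕ, 1 ≤ a → G a ≤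
      (∑' k, (1 - q) * qPoch q q p * qPoch q (q ^ (p + 1)) k * z ^ k / qPoch q q k) *
        (q ^ a / (1 - q) ^ (p + 1)) := by
    intro a ha
    rw [← tsum_mul_right]
    apply Summable.tsum_le_tsum _ (summable_cF hq0 hq1 hz0 hz1 p a ha)
      ((summable_c hq0 hq1 hz0 hz1 p).mul_right _)
    intro k
    apply mul_le_mul_of_nonneg_left _ (hcnn k)
    rw [auxF]
    have h4 := qPoch_pos hq0 hq1 (b := a + k) (by omega) (p + 1)
    have h5 : (1 - q) ^ (p + 1) ≤ qPoch q (q ^ (a + k)) (p + 1) :=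
      qPoch_ge hq0 hq1 (by omega) (p + 1)
    have h6 : q ^ (a * (p + 1)) ≤ q ^ a :=
      pow_le_pow_of_le_one hq0.le hq1.le (by nlinarith)
    have h7 : (0:ℝ) < (1 - q) ^ (p + 1) := by
      have : (0:ℝ) < 1 - q := by linarith
      positivity
    exact div_le_div₀ (by positivity) h6 h7 h5
  have htendG : Tendsto (fun N : ℕ => G (m + 1 + N)) atTop (nhds 0) := by
    set S : ℝ := ∑' k, (1 - q) * qPoch q q p * qPoch q (q ^ (p + 1)) k * z ^ k / qPoch q q k
      with hSdef
    have hS : 0 ≤ S := tsum_nonneg hcnn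
    apply squeeze_zero (fun N => hGnonneg _ (by omega))
      (g := fun N => S * q ^ (m + 1) / (1 - q) ^ (p + 1) * q ^ N)
    · intro N
      refine le_trans (hGle (m + 1 + N) (by omega)) (le_of_eq ?_)
      rw [pow_add]
      ring
    · simpa using
        (tendsto_pow_atTop_nhds_zero_of_lt_one hq0.le hq1).const_mul
          (S * q ^ (m + 1) / (1 - q) ^ (p + 1))
  -- telescoping
  have hdiff' : ∀ j : ℕ, 0 ≤ G (m + 1 + j) - G (m + 1 + j + 1) := by
    intro j
    have h := hdiff (m + j)
    rw [show m + j + 1 = m + 1 + j by ring] at h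
    rw [show m + j + 2 = m + 1 + j + 1 by ring] at h
    exact h
  have hHS : HasSum (fun j : ℕ => G (m + 1 + j) - G (m + 1 + j + 1)) (G (m + 1)) := by
    rw [hasSum_iff_tendsto_nat_of_nonneg hdiff']
    have hps : ∀ N : ℕ, ∑ j ∈ Finset.range N, (G (m + 1 + j) - G (m + 1 + j + 1))
        = G (m + 1) - G (m + 1 + N) := by
      intro N
      exact Finset.sum_range_sub' (fun j => G (m + 1 + j)) N
    simp only [hps]
    simpa using tendsto_const_nhds.sub htendG
  -- reindex the subtype sum
  let e : ℕ ≃ {a : ℕ // m < a} :=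
    { toFun := fun j => ⟨m + 1 + j, by omega⟩
      invFun := fun a => a.1 - (m + 1)
      left_inv := fun j => by show m + 1 + j - (m + 1) = j; omega
      right_inv := fun a => Subtype.ext (by
        show m + 1 + (a.1 - (m + 1)) = a.1
        have := a.2
        omega) }
  rw [← Equiv.tsum_eq e]
  have h1 : ∀ j : ℕ, 1 / qInt q (m + 1 + j) * Cq1 q (m + 1 + j) (p + 1) z
      = G (m + 1 + j) - G (m + 1 + j + 1) := by
    intro j
    have h := hterm (m + j)
    rw [show m + j + 1 = m + 1 + j by ring] at h
    rw [show m + j + 2 = m + 1 + j + 1 by ring] at h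
    exact h
  calc ∑' (c : ℕ), 1 / qInt q (↑(e c)) * Cq1 q (↑(e c)) (p + 1) z
      = ∑' j : ℕ, (G (m + 1 + j) - G (m + 1 + j + 1)) := tsum_congr fun j => h1 j
    _ = G (m + 1) := hHS.tsum_eq
    _ = _ := by
        rw [qHyp, ← tsum_mul_left]
        simp only [hGdef]
        exact tsum_congr fun k => (key2 hq0 hq1 z m p k).symm
end

section
/- Let 0 < q < 1 and let z be real with 0 ≤ z < 1. For all integers m ≥ 0 and n ≥ 1, one has ∑_{a > m} ((1 − q^m z^{a−m})/[a])·C_q^{(1)}(a,n;z) = (q^n/[n])·C_q^{(1)}(m,n;z), where the sum is over integers a > m. -/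
noncomputable def Pq (q : ℝ) (j : ℕ) : ℝ := ∏ i ∈ Finset.range j, (1 - q ^ (i + 1))

section Pq
variable {q : ℝ} (hq0 : 0 < q) (hq1 : q < 1)

lemma qPoch_q (j : ℕ) : qPoch q q j = Pq q j := by
  refine Finset.prod_congr rfl fun i _ => ?_
  rw [pow_succ]

include hq0 hq1

lemma Pq_pos (j : ℕ) : 0 < Pq q j := by
  refine Finset.prod_pos fun i _ => ?_
  have : q ^ (i+1) < 1 := pow_lt_one₀ hq0.le hq1 (by omega)
  linarith

lemma Pq_le_one (j : ℕ) : Pq q j ≤ 1 := by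
  refine Finset.prod_le_one (fun i _ => ?_) (fun i _ => ?_)
  · have : q ^ (i+1) < 1 := pow_lt_one₀ hq0.le hq1 (by omega)
    linarith
  · have : 0 < q ^ (i+1) := pow_pos hq0 _
    linarith

omit hq0 hq1 in
lemma Pq_succ (j : ℕ) : Pq q (j+1) = Pq q j * (1 - q ^ (j+1)) := Finset.prod_range_succ _ _

omit hq0 hq1 in
lemma qPoch_pow_succ (b k : ℕ) : qPoch q (q ^ (b+1)) k * Pq q b = Pq q (b + k) := by
  have h1 : qPoch q (q ^ (b+1)) k = ∏ i ∈ Finset.range k, (1 - q ^ (b + i + 1)) := by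
    unfold qPoch
    refine Finset.prod_congr rfl fun i _ => ?_
    rw [← pow_add]
    congr 2
    omega
  rw [h1, Pq, Pq, Finset.prod_range_add, mul_comm]

lemma qPoch_pow_nonneg (a k : ℕ) : 0 ≤ qPoch q (q ^ a) k := by
  refine Finset.prod_nonneg fun i _ => ?_
  rw [← pow_add]
  have : q ^ (i + a) ≤ 1 := pow_le_one₀ hq0.le hq1.le
  linarith

lemma qPoch_pow_le_one (a k : ℕ) : qPoch q (q ^ a) k ≤ 1 := by
  refine Finset.prod_le_one (fun i _ => ?_) (fun i _ => ?_) <;> rw [← pow_add]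
  · have : q ^ (i + a) ≤ 1 := pow_le_one₀ hq0.le hq1.le
    linarith
  · have : 0 ≤ q ^ (i + a) := pow_nonneg hq0.le _
    linarith

lemma Pq_anti {a b : ℕ} (hab : a ≤ b) : Pq q b ≤ Pq q a := by
  obtain ⟨c, rfl⟩ := Nat.exists_eq_add_of_le hab
  rw [Pq, Finset.prod_range_add, ← Pq]
  have h1 : ∏ i ∈ Finset.range c, (1 - q ^ (a + i + 1)) ≤ 1 := by
    refine Finset.prod_le_one (fun i _ => ?_) (fun i _ => ?_)
    · have : q ^ (a+i+1) < 1 := pow_lt_one₀ hq0.le hq1 (by omega)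
      linarith
    · have : 0 < q ^ (a+i+1) := pow_pos hq0 _
      linarith
  have h2 : 0 ≤ ∏ i ∈ Finset.range c, (1 - q ^ (a + i + 1)) := by
    refine Finset.prod_nonneg fun i _ => ?_
    have : q ^ (a+i+1) < 1 := pow_lt_one₀ hq0.le hq1 (by omega)
    linarith
  calc Pq q a * ∏ i ∈ Finset.range c, (1 - q ^ (a + i + 1)) ≤ Pq q a * 1 := by
        exact mul_le_mul_of_nonneg_left h1 (Pq_pos hq0 hq1 a).le
    _ = Pq q a := mul_one _

lemma Pq_lb : ∃ ε : ℝ, 0 < ε ∧ ∀ j, ε ≤ Pq q j := by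
  have h1q : 0 < 1 - q := by linarith
  obtain ⟨N, hN⟩ : ∃ N, q ^ (N+1) < (1 - q)/2 := by
    have := (tendsto_pow_atTop_nhds_zero_of_lt_one hq0.le hq1).eventually
      (eventually_lt_nhds (show (0:ℝ) < (1-q)/2 by linarith))
    obtain ⟨N, hN⟩ := this.exists
    exact ⟨N, by
      calc q ^ (N+1) ≤ q ^ N := pow_le_pow_of_le_one hq0.le hq1.le (by omega)
        _ < (1-q)/2 := hN⟩
  have hPN := Pq_pos hq0 hq1 N
  refine ⟨Pq q N / 2, by positivity, ?_⟩
  have key : ∀ k, Pq q N * (1 - ∑ i ∈ Finset.range k, q ^ (N + i + 1)) ≤ Pq q (N + k) := by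
    intro k
    induction k with
    | zero => simp
    | succ k ih =>
      rw [Finset.sum_range_succ, show N + (k+1) = (N+k)+1 from rfl, Pq_succ]
      have hx : 0 < q ^ (N + k + 1) := pow_pos hq0 _
      have hx1 : q ^ (N + k + 1) < 1 := pow_lt_one₀ hq0.le hq1 (by omega)
      have hs : 0 ≤ ∑ i ∈ Finset.range k, q ^ (N + i + 1) :=
        Finset.sum_nonneg fun i _ => (pow_pos hq0 _).le
      have h5 : 0 ≤ 1 - q ^ (N+k+1) := by linarith
      nlinarith [mul_le_mul_of_nonneg_right ih h5,
        mul_nonneg (mul_nonneg hPN.le hs) hx.le]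
  have hsum : ∀ k, ∑ i ∈ Finset.range k, q ^ (N + i + 1) ≤ 1/2 := by
    intro k
    have : ∑ i ∈ Finset.range k, q ^ (N + i + 1)
        = q ^ (N+1) * ∑ i ∈ Finset.range k, q ^ i := by
      rw [Finset.mul_sum]
      refine Finset.sum_congr rfl fun i _ => ?_
      rw [← pow_add]; congr 1; omega
    rw [this]
    have hgeom : ∑ i ∈ Finset.range k, q ^ i ≤ 1/(1-q) := by
      rw [geom_sum_eq (by linarith : q ≠ 1)]
      have heq : (q ^ k - 1)/(q - 1) = (1 - q ^ k)/(1-q) := by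
        rw [div_eq_div_iff (by linarith) (by linarith)]
        ring
      rw [heq, div_le_div_iff_of_pos_right (by linarith)]
      have : 0 < q ^ k := pow_pos hq0 _
      linarith
    have h2 : q ^ (N+1) * ∑ i ∈ Finset.range k, q ^ i ≤ q ^ (N+1) * (1/(1-q)) :=
      mul_le_mul_of_nonneg_left hgeom (pow_pos hq0 _).le
    calc q ^ (N+1) * ∑ i ∈ Finset.range k, q ^ i ≤ q ^ (N+1) * (1/(1-q)) := h2
      _ ≤ ((1-q)/2) * (1/(1-q)) := by
          apply mul_le_mul_of_nonneg_right hN.le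
          positivity
      _ = 1/2 := by field_simp
  intro j
  rcases le_or_gt j N with h | h
  · have := Pq_anti hq0 hq1 h
    linarith
  · obtain ⟨k, rfl⟩ := Nat.exists_eq_add_of_le h.le
    have h1 := key k
    have h2 := hsum k
    nlinarith

end Pq

section More
variable {q : ℝ} (hq0 : 0 < q) (hq1 : q < 1)

lemma qFact_eq (hq1 : q < 1) (m : ℕ) : qFact q m * (1 - q) ^ m = Pq q m := by
  induction m with
  | zero => simp [qFact, Pq]
  | succ m ih =>
    rw [qFact, Finset.prod_range_succ, ← qFact, Pq_succ, ← ih, pow_succ, qInt]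
    have h1 : (1:ℝ) - q ≠ 0 := by linarith
    field_simp

/-- the coefficient c_k = (q^n;q)_k / (q;q)_k -/
noncomputable def cc (q : ℝ) (n k : ℕ) : ℝ := qPoch q (q ^ n) k / Pq q k

include hq0 hq1

lemma cc_nonneg (n k : ℕ) : 0 ≤ cc q n k :=
  div_nonneg (qPoch_pow_nonneg hq0 hq1 n k) (Pq_pos hq0 hq1 k).le

lemma cc_le {ε : ℝ} (hε : 0 < ε) (hPe : ∀ j, ε ≤ Pq q j) (n k : ℕ) : cc q n k ≤ ε⁻¹ := by
  rw [cc, div_le_iff₀ (Pq_pos hq0 hq1 k)]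
  calc qPoch q (q ^ n) k ≤ 1 := qPoch_pow_le_one hq0 hq1 n k
    _ ≤ ε⁻¹ * ε := by rw [inv_mul_cancel₀ hε.ne']
    _ ≤ ε⁻¹ * Pq q k := by
        apply mul_le_mul_of_nonneg_left (hPe k)
        positivity

lemma cc_succ (k n : ℕ) : cc q n (k+1) * Pq q (k+1) = cc q n k * Pq q k * (1 - q ^ (k+n)) := by
  have h1 : Pq q k ≠ 0 := (Pq_pos hq0 hq1 k).ne'
  have h3 : (1:ℝ) - q ^ (k+1) ≠ 0 := by
    have : q ^ (k+1) < 1 := pow_lt_one₀ hq0.le hq1 (by omega)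
    linarith
  rw [cc, cc, qPoch, Finset.prod_range_succ, ← qPoch, ← pow_add, Pq_succ]
  field_simp

lemma sumS (n : ℕ) (j : ℕ) :
    (∑ k ∈ Finset.range j, cc q n k * q ^ ((j - k) * n)) * (1 - q ^ n)
      = cc q n j * q ^ n * (1 - q ^ j) := by
  induction j with
  | zero => simp
  | succ j ih =>
    have hstep : ∑ k ∈ Finset.range (j+1), cc q n k * q ^ ((j + 1 - k) * n)
        = q ^ n * ((∑ k ∈ Finset.range j, cc q n k * q ^ ((j - k) * n)) + cc q n j) := by
      rw [Finset.sum_range_succ, mul_add, Finset.mul_sum]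
      congr 1
      · refine Finset.sum_congr rfl fun k hk => ?_
        rw [Finset.mem_range] at hk
        have : (j + 1 - k) * n = n + (j - k) * n := by
          have : j + 1 - k = (j - k) + 1 := by omega
          rw [this]; ring
        rw [this, pow_add]; ring
      · have : j + 1 - j = 1 := by omega
        rw [this]; ring
    rw [hstep]
    -- (q^n * (S + cc j)) * (1-q^n) = cc (j+1) * q^n * (1 - q^(j+1))
    have hPk := Pq_pos hq0 hq1 j
    have hPk1 := Pq_pos hq0 hq1 (j+1)
    have hcs := cc_succ hq0 hq1 j n
    have hP2 : Pq q (j+1) = Pq q j * (1 - q^(j+1)) := Pq_succ _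
    -- from hcs : cc (j+1) * Pq (j+1) = cc j * Pq j * (1 - q^(j+n))
    rw [hP2] at hcs
    have h5 : (cc q n (j+1) * (1 - q^(j+1))) * Pq q j = (cc q n j * (1 - q^(j+n))) * Pq q j := by
      linear_combination hcs
    have hkey := mul_right_cancel₀ hPk.ne' h5
    linear_combination q^n * ih - q^n * hkey

omit hq0 hq1 in
lemma eKey (m t : ℕ) :
    Pq q m * qPoch q (q ^ m) (t+1)
      = Pq q (m+t+1) - q ^ m * (1 - q ^ (t+1)) * Pq q (m+t) := by
  cases m with
  | zero =>
    have h0 : qPoch q (q ^ 0) (t+1) = 0 := by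
      apply Finset.prod_eq_zero (Finset.mem_range.2 (by omega : 0 < t+1))
      simp
    rw [h0, mul_zero]
    simp only [Nat.zero_add, pow_zero, one_mul]
    rw [Pq_succ]
    ring
  | succ s =>
    have h7 : qPoch q (q ^ (s+1)) (t+1) * Pq q s = Pq q (s + (t+1)) := qPoch_pow_succ s (t+1)
    have hPs : Pq q (s+1) = Pq q s * (1 - q^(s+1)) := Pq_succ _
    have h8 : Pq q (s+1+t+1) = Pq q (s+1+t) * (1 - q^(s+1+t+1)) := Pq_succ _
    have h9 : Pq q (s + (t+1)) = Pq q (s+1+t) := by rw [show s + (t+1) = s+1+t from by omega]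
    rw [h9] at h7
    rw [hPs, h8]
    have hq2 : q ^ (s+1+t+1) = q ^ (s+1) * q ^ (t+1) := by ring
    linear_combination (1 - q^(s+1)) * h7 + Pq q (s+1+t) * hq2

end More

section Expand
variable {q z : ℝ} {n : ℕ} (hq0 : 0 < q) (hq1 : q < 1)

include hq0 hq1

lemma Cq1_expand (b : ℕ) :
    Cq1 q (b+1) n z = q ^ ((b+1)*n) * Pq q n * (1 - q ^ (b+1)) *
      ∑' k : ℕ, cc q n k * Pq q (b+k) / Pq q (b+1+n+k) * z ^ k := by
  have h1q : (1:ℝ) - q ≠ 0 := by linarith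
  have hPb := (Pq_pos hq0 hq1 b).ne'
  have hPbn := (Pq_pos hq0 hq1 (b+1+n)).ne'
  have hfact : ∀ m : ℕ, qFact q m = Pq q m / (1-q)^m := by
    intro m
    rw [← qFact_eq hq1 m]
    field_simp
  rw [Cq1, qHyp, ← tsum_mul_left, ← tsum_mul_left]
  refine tsum_congr fun k => ?_
  have hPk := (Pq_pos hq0 hq1 k).ne'
  have hPbnk := (Pq_pos hq0 hq1 (b+1+n+k)).ne'
  have h7 : qPoch q (q ^ (b+1)) k = Pq q (b+k) / Pq q b := by
    rw [eq_div_iff hPb]; exact qPoch_pow_succ b k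
  have h8 : qPoch q (q ^ (b+1+n+1)) k = Pq q (b+1+n+k) / Pq q (b+1+n) := by
    rw [eq_div_iff hPbn]; exact qPoch_pow_succ (b+1+n) k
  have hPsucc : Pq q (b+1) = Pq q b * (1 - q^(b+1)) := Pq_succ _
  rw [hfact, hfact, hfact, qPoch_q, h7, h8, cc, hPsucc]
  have hpow : (1-q)^(b+1) * (1-q)^n = (1-q)^(b+1+n) := by rw [← pow_add]
  field_simp
  ring

lemma Cq1_gen (m : ℕ) :
    Cq1 q m n z = q ^ (m*n) * Pq q n *
      ∑' j : ℕ, Pq q m * qPoch q (q ^ m) j * cc q n j * z ^ j / Pq q (m+n+j) := by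
  have h1q : (1:ℝ) - q ≠ 0 := by linarith
  have hPm := (Pq_pos hq0 hq1 m).ne'
  have hPmn := (Pq_pos hq0 hq1 (m+n)).ne'
  have hfact : ∀ m : ℕ, qFact q m = Pq q m / (1-q)^m := by
    intro m
    rw [← qFact_eq hq1 m]
    field_simp
  rw [Cq1, qHyp, ← tsum_mul_left, ← tsum_mul_left]
  refine tsum_congr fun j => ?_
  have hPj := (Pq_pos hq0 hq1 j).ne'
  have hPmnj := (Pq_pos hq0 hq1 (m+n+j)).ne'
  have h8 : qPoch q (q ^ (m+n+1)) j = Pq q (m+n+j) / Pq q (m+n) := by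
    rw [eq_div_iff hPmn]; exact qPoch_pow_succ (m+n) j
  rw [hfact, hfact, hfact, qPoch_q, h8, cc]
  have hpow : (1-q)^m * (1-q)^n = (1-q)^(m+n) := by rw [← pow_add]
  field_simp
  ring

lemma tele (hn : 1 ≤ n) {ε : ℝ} (hε : 0 < ε) (hPe : ∀ j, ε ≤ Pq q j) (m k : ℕ) :
    HasSum (fun i : ℕ => q ^ ((m+i+1)*n) * Pq q (m+i+k) / Pq q (m+i+1+n+k))
      (q ^ ((m+1)*n) * Pq q (m+k) / Pq q (m+n+k) / (1 - q ^ n)) := by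
  have hqn : (0:ℝ) < 1 - q ^ n := by
    have : q ^ n < 1 := pow_lt_one₀ hq0.le hq1 (by omega)
    linarith
  set H : ℕ → ℝ := fun i => q ^ ((m+i+1)*n) * Pq q (m+i+k) / Pq q (m+i+n+k) / (1 - q^n) with hH
  set f : ℕ → ℝ := fun i => q ^ ((m+i+1)*n) * Pq q (m+i+k) / Pq q (m+i+1+n+k) with hf
  have hdiff : ∀ i, f i = H i - H (i+1) := by
    intro i
    have e1 : m+(i+1)+k = m+i+k+1 := by omega
    have e2 : m+(i+1)+n+k = m+i+n+k+1 := by omega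
    have e3 : m+(i+1)+1 = m+i+2 := by omega
    simp only [hH, hf, e1, e2, e3]
    have p1 : Pq q (m+i+k+1) = Pq q (m+i+k) * (1 - q^(m+i+k+1)) := Pq_succ _
    have p2 : Pq q (m+i+n+k+1) = Pq q (m+i+n+k) * (1 - q^(m+i+n+k+1)) := Pq_succ _
    have e4 : m+i+1+n+k = m+i+n+k+1 := by omega
    rw [p1, p2, e4, p2]
    have hB := (Pq_pos hq0 hq1 (m+i+n+k)).ne'
    have hB1 : (1:ℝ) - q^(m+i+n+k+1) ≠ 0 := by
      have : q ^ (m+i+n+k+1) < 1 := pow_lt_one₀ hq0.le hq1 (by omega)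
      linarith
    field_simp
    ring
  have hnn : ∀ i, 0 ≤ f i := by
    intro i
    have := Pq_pos hq0 hq1 (m+i+k)
    have := Pq_pos hq0 hq1 (m+i+1+n+k)
    positivity
  have hHlim : Filter.Tendsto H Filter.atTop (nhds 0) := by
    apply squeeze_zero (fun i => ?_) (fun i => ?_)
      (by simpa using (tendsto_pow_atTop_nhds_zero_of_lt_one hq0.le hq1).const_mul (ε⁻¹ / (1 - q^n)))
    · have := Pq_pos hq0 hq1 (m+i+k)
      have := Pq_pos hq0 hq1 (m+i+n+k)
      have : (0:ℝ) < 1 - q^n := hqn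
      positivity
    · show q ^ ((m+i+1)*n) * Pq q (m+i+k) / Pq q (m+i+n+k) / (1 - q^n) ≤ ε⁻¹ / (1-q^n) * q ^ i
      have hb1 : q ^ ((m+i+1)*n) ≤ q ^ i := by
        apply pow_le_pow_of_le_one hq0.le hq1.le
        calc i ≤ m+i+1 := by omega
          _ ≤ (m+i+1)*n := Nat.le_mul_of_pos_right _ (by omega)
      have hb2 : Pq q (m+i+k) ≤ 1 := Pq_le_one hq0 hq1 _
      have hb3 : ε ≤ Pq q (m+i+n+k) := hPe _
      have hP := Pq_pos hq0 hq1 (m+i+n+k)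
      rw [show ε⁻¹ / (1-q^n) * q ^ i = (ε⁻¹ * q ^ i)/(1-q^n) from by ring,
        div_le_div_iff_of_pos_right hqn]
      calc q ^ ((m+i+1)*n) * Pq q (m+i+k) / Pq q (m+i+n+k)
          ≤ q ^ i * 1 / ε := by
            apply div_le_div₀ (by positivity) ?_ hε hb3
            exact mul_le_mul hb1 hb2 (Pq_pos hq0 hq1 _).le (by positivity)
        _ = ε⁻¹ * q ^ i := by field_simp
  rw [show (q ^ ((m+1)*n) * Pq q (m+k) / Pq q (m+n+k) / (1 - q ^ n)) = H 0 from rfl]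
  rw [hasSum_iff_tendsto_nat_of_nonneg hnn]
  have hpartial : ∀ N, ∑ i ∈ Finset.range N, f i = H 0 - H N := by
    intro N
    rw [show ∑ i ∈ Finset.range N, f i = ∑ i ∈ Finset.range N, (H i - H (i+1)) from
      Finset.sum_congr rfl fun i _ => hdiff i]
    exact Finset.sum_range_sub' H N
  simp only [hpartial]
  simpa using Filter.Tendsto.const_sub (H 0) hHlim

end Expand

noncomputable def gOne (q z : ℝ) (n m i k : ℕ) : ℝ :=
  q ^ ((m+i+1)*n) * (cc q n k * Pq q (m+i+k) / Pq q (m+i+1+n+k) * z ^ k)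

noncomputable def gTwo (q z : ℝ) (n m i k : ℕ) : ℝ := z ^ (i+1) * gOne q z n m i k

noncomputable def uu (q z : ℝ) (n m k : ℕ) : ℝ :=
  cc q n k * z ^ k * (q ^ ((m+1)*n) * Pq q (m+k) / Pq q (m+n+k) / (1 - q ^ n))

noncomputable def ww (q z : ℝ) (n m s : ℕ) : ℝ :=
  z ^ (s+1) * (Pq q (m+s) / Pq q (m+s+1+n)) *
    (q ^ (m*n) * (cc q n (s+1) * q ^ n * (1 - q ^ (s+1)) / (1 - q ^ n)))

noncomputable def rr (q z : ℝ) (n m j : ℕ) : ℝ :=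
  Pq q m * qPoch q (q ^ m) j * cc q n j * z ^ j / Pq q (m+n+j)

noncomputable def Phi (q z : ℝ) (n m : ℕ) (p : ℕ × ℕ) : ℝ :=
  if p.2 ≤ p.1 then
    z ^ (p.1+1) * (cc q n p.2 * q ^ ((m+p.1+1-p.2)*n)) * (Pq q (m+p.1) / Pq q (m+p.1+1+n))
  else 0

section Main
variable {q z : ℝ} {n : ℕ} (hq0 : 0 < q) (hq1 : q < 1) (hz0 : 0 ≤ z) (hz1 : z < 1)

include hq0 hq1 hz0

lemma gOne_nonneg (m i k : ℕ) : 0 ≤ gOne q z n m i k := by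
  unfold gOne
  have h1 := cc_nonneg hq0 hq1 n k
  have h2 := (Pq_pos hq0 hq1 (m+i+k)).le
  have h3 := Pq_pos hq0 hq1 (m+i+1+n+k)
  positivity

lemma gOne_le {ε : ℝ} (hε : 0 < ε) (hPe : ∀ j, ε ≤ Pq q j) (hn : 1 ≤ n) (m i k : ℕ) :
    gOne q z n m i k ≤ ε⁻¹ * ε⁻¹ * (q ^ i * z ^ k) := by
  have hBpos := Pq_pos hq0 hq1 (m+i+1+n+k)
  have h1 : cc q n k * Pq q (m+i+k) / Pq q (m+i+1+n+k) ≤ ε⁻¹ * ε⁻¹ := by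
    rw [div_le_iff₀ hBpos]
    calc cc q n k * Pq q (m+i+k) ≤ ε⁻¹ * 1 :=
          mul_le_mul (cc_le hq0 hq1 hε hPe n k) (Pq_le_one hq0 hq1 _)
            (Pq_pos hq0 hq1 _).le (by positivity)
      _ = ε⁻¹ * ε⁻¹ * ε := by field_simp
      _ ≤ ε⁻¹ * ε⁻¹ * Pq q (m+i+1+n+k) := by
          apply mul_le_mul_of_nonneg_left (hPe _) (by positivity)
  have he : q ^ ((m+i+1)*n) ≤ q ^ i := by
    apply pow_le_pow_of_le_one hq0.le hq1.le
    calc i ≤ m+i+1 := by omega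
      _ ≤ (m+i+1)*n := Nat.le_mul_of_pos_right _ (by omega)
  unfold gOne
  calc q ^ ((m+i+1)*n) * (cc q n k * Pq q (m+i+k) / Pq q (m+i+1+n+k) * z ^ k)
      ≤ q ^ i * (ε⁻¹ * ε⁻¹ * z ^ k) := by
        apply mul_le_mul he (mul_le_mul_of_nonneg_right h1 (pow_nonneg hz0 k))
          ?_ (pow_nonneg hq0.le i)
        have := cc_nonneg hq0 hq1 n k
        have := (Pq_pos hq0 hq1 (m+i+k)).le
        positivity
    _ = ε⁻¹ * ε⁻¹ * (q ^ i * z ^ k) := by ring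

include hz1

lemma summable_gOne {ε : ℝ} (hε : 0 < ε) (hPe : ∀ j, ε ≤ Pq q j) (hn : 1 ≤ n) (m : ℕ) :
    Summable (fun p : ℕ × ℕ => gOne q z n m p.1 p.2) := by
  have hb : Summable (fun p : ℕ × ℕ => ε⁻¹ * ε⁻¹ * (q ^ p.1 * z ^ p.2)) := by
    have h0 : Summable (fun p : ℕ × ℕ => q ^ p.1 * z ^ p.2) :=
      (summable_geometric_of_lt_one hq0.le hq1).mul_of_nonneg
        (summable_geometric_of_lt_one hz0 hz1) (fun i => by positivity)
        (fun k => by positivity)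
    exact h0.mul_left _
  exact Summable.of_nonneg_of_le (fun p => gOne_nonneg hq0 hq1 hz0 m p.1 p.2)
    (fun p => gOne_le hq0 hq1 hz0 hε hPe hn m p.1 p.2) hb

lemma summable_gTwo {ε : ℝ} (hε : 0 < ε) (hPe : ∀ j, ε ≤ Pq q j) (hn : 1 ≤ n) (m : ℕ) :
    Summable (fun p : ℕ × ℕ => gTwo q z n m p.1 p.2) := by
  apply Summable.of_nonneg_of_le
    (fun p => mul_nonneg (pow_nonneg hz0 _) (gOne_nonneg hq0 hq1 hz0 m p.1 p.2))
    (fun p => ?_) (summable_gOne hq0 hq1 hz0 hz1 hε hPe hn m)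
  calc z ^ (p.1+1) * gOne q z n m p.1 p.2 ≤ 1 * gOne q z n m p.1 p.2 := by
        apply mul_le_mul_of_nonneg_right (pow_le_one₀ hz0 hz1.le)
          (gOne_nonneg hq0 hq1 hz0 m p.1 p.2)
    _ = gOne q z n m p.1 p.2 := one_mul _

omit hz0 hz1 in
lemma hasSum_gOne (hn : 1 ≤ n) {ε : ℝ} (hε : 0 < ε) (hPe : ∀ j, ε ≤ Pq q j) (m k : ℕ) :
    HasSum (fun i : ℕ => gOne q z n m i k) (uu q z n m k) := by
  have h := (tele hq0 hq1 hn hε hPe m k).mul_left (cc q n k * z ^ k)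
  rw [show (fun i : ℕ => gOne q z n m i k)
      = fun i => cc q n k * z ^ k * (q ^ ((m+i+1)*n) * Pq q (m+i+k) / Pq q (m+i+1+n+k)) from
    funext fun i => by unfold gOne; ring]
  simp only [uu]
  exact h

omit hq0 hq1 hz0 hz1 in
lemma gTwo_eq_Phi (m : ℕ) (p : ℕ × ℕ) :
    gTwo q z n m p.1 p.2 = Phi q z n m (p.1 + p.2, p.2) := by
  obtain ⟨i, k⟩ := p
  simp only [gTwo, gOne, Phi]
  rw [if_pos (Nat.le_add_left k i)]
  rw [show m+(i+k)+1-k = m+i+1 from by omega, show m+(i+k)+1+n = m+i+1+n+k from by omega,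
    show m+(i+k) = m+i+k from by omega]
  ring

omit hz0 hz1 in
lemma sum_Phi (hn : 1 ≤ n) (m s : ℕ) : ∑' k : ℕ, Phi q z n m (s, k) = ww q z n m s := by
  have hqn : (0:ℝ) < 1 - q ^ n := by
    have : q ^ n < 1 := pow_lt_one₀ hq0.le hq1 (by omega)
    linarith
  rw [tsum_eq_sum (s := Finset.range (s+1)) (f := fun k => Phi q z n m (s, k))
    (fun k hk => by
      simp only [Phi]
      rw [if_neg]
      simp only [Finset.mem_range] at hk
      simp only [not_le]
      omega)]
  have h1 : ∀ k ∈ Finset.range (s+1), Phi q z n m (s, k)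
      = (z ^ (s+1) * (Pq q (m+s) / Pq q (m+s+1+n)) * q ^ (m*n)) * (cc q n k * q ^ ((s+1-k)*n)) := by
    intro k hk
    simp only [Finset.mem_range] at hk
    simp only [Phi]
    rw [if_pos (by omega : k ≤ s)]
    rw [show (m+s+1-k)*n = m*n + (s+1-k)*n from by
      have : m+s+1-k = m + (s+1-k) := by omega
      rw [this, Nat.add_mul], pow_add]
    ring
  rw [Finset.sum_congr rfl h1, ← Finset.mul_sum]
  have h3 : ∑ k ∈ Finset.range (s+1), cc q n k * q ^ ((s+1-k)*n)
      = cc q n (s+1) * q ^ n * (1 - q ^ (s+1)) / (1 - q ^ n) := by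
    rw [eq_div_iff hqn.ne']
    exact sumS hq0 hq1 n (s+1)
  rw [h3]
  unfold ww
  ring

end Main

/-- ∑_{a>m} ((1 − q^m z^{a−m})/[a])·C_q^{(1)}(a,n;z) = (q^n/[n])·C_q^{(1)}(m,n;z) for n ≥ 1. -/
theorem q_connector_transport (q : ℝ) (hq0 : 0 < q) (hq1 : q < 1)
    (z : ℝ) (hz0 : 0 ≤ z) (hz1 : z < 1) (m n : ℕ) (hn : 1 ≤ n) :
    ∑' a : {a : ℕ // m < a}, (1 - q ^ m * z ^ ((a : ℕ) - m)) / qInt q a * Cq1 q a n z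
      = q ^ n / qInt q n * Cq1 q m n z := by
  obtain ⟨ε, hε, hPe⟩ := Pq_lb hq0 hq1
  have h1q : (0:ℝ) < 1 - q := by linarith
  have hqn : (0:ℝ) < 1 - q ^ n := by
    have : q ^ n < 1 := pow_lt_one₀ hq0.le hq1 (by omega)
    linarith
  have hg1 : Summable (fun p : ℕ × ℕ => gOne q z n m p.1 p.2) :=
    summable_gOne hq0 hq1 hz0 hz1 hε hPe hn m
  have hg2 : Summable (fun p : ℕ × ℕ => gTwo q z n m p.1 p.2) :=
    summable_gTwo hq0 hq1 hz0 hz1 hε hPe hn m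
  -- reindexing equiv
  let e : ℕ ≃ {a : ℕ // m < a} :=
    { toFun := fun i => ⟨m+i+1, by omega⟩
      invFun := fun a => (a : ℕ) - (m+1)
      left_inv := fun i => by show m+i+1 - (m+1) = i; omega
      right_inv := fun a => by
        ext
        show m + ((a:ℕ) - (m+1)) + 1 = (a:ℕ)
        have := a.2
        omega }
  -- step 1 : termwise rewrite
  have hstep1 : ∀ i : ℕ,
      (fun a : {a : ℕ // m < a} =>
        (1 - q ^ m * z ^ ((a : ℕ) - m)) / qInt q a * Cq1 q a n z) (e i)
      = ((1-q) * Pq q n) *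
          ((∑' k, gOne q z n m i k) - q ^ m * ∑' k, gTwo q z n m i k) := by
    intro i
    show (1 - q ^ m * z ^ ((m+i+1) - m)) / qInt q (m+i+1) * Cq1 q (m+i+1) n z = _
    rw [show m+i+1-m = i+1 from by omega]
    have hC := Cq1_expand (n := n) (z := z) hq0 hq1 (m+i)
    have hsum1 : (∑' k, gOne q z n m i k)
        = q ^ ((m+i+1)*n) * ∑' k, cc q n k * Pq q (m+i+k) / Pq q (m+i+1+n+k) * z ^ k := by
      simp only [gOne]; exact tsum_mul_left
    have hsum2 : (∑' k, gTwo q z n m i k) = z ^ (i+1) * ∑' k, gOne q z n m i k := by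
      simp only [gTwo]; exact tsum_mul_left
    rw [hC, hsum2, hsum1, qInt]
    have hne : (1:ℝ) - q ^ (m+i+1) ≠ 0 := by
      have : q ^ (m+i+1) < 1 := pow_lt_one₀ hq0.le hq1 (by omega)
      linarith
    field_simp
  -- marginal summabilities
  have hG1s : Summable (fun i : ℕ => ∑' k, gOne q z n m i k) :=
    (hg1.hasSum.prod_fiberwise (fun i => (hg1.prod_factor i).hasSum)).summable
  have hG2s : Summable (fun i : ℕ => ∑' k, gTwo q z n m i k) :=
    (hg2.hasSum.prod_fiberwise (fun i => (hg2.prod_factor i).hasSum)).summable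
  -- D1
  have hD1 : ∑' i : ℕ, (∑' k, gOne q z n m i k) = ∑' k, uu q z n m k := by
    rw [← Summable.tsum_comm (f := fun i k => gOne q z n m i k) hg1]
    exact tsum_congr fun k => (hasSum_gOne hq0 hq1 hn hε hPe m k).tsum_eq
  -- D2 machinery
  have hinj : Function.Injective (fun p : ℕ × ℕ => (p.1 + p.2, p.2)) := by
    intro p1 p2 h
    simp only [Prod.mk.injEq] at h
    obtain ⟨h1, h2⟩ := h
    ext
    · omega
    · exact h2
  have hsupp : Function.support (Phi q z n m)
      ⊆ Set.range (fun p : ℕ × ℕ => (p.1 + p.2, p.2)) := by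
    rintro ⟨s, k⟩ hp
    by_cases h : k ≤ s
    · exact ⟨(s - k, k), by show ((s-k) + k, k) = (s, k); rw [show s-k+k = s from by omega]⟩
    · exfalso
      apply hp
      simp [Phi, h]
  have hcomp : (Phi q z n m) ∘ (fun p : ℕ × ℕ => (p.1 + p.2, p.2))
      = fun p : ℕ × ℕ => gTwo q z n m p.1 p.2 :=
    funext fun p => (gTwo_eq_Phi (q := q) (z := z) (n := n) m p).symm
  have hPhiS : Summable (Phi q z n m) := by
    rw [← hinj.summable_iff (fun x hx => by
      by_contra h
      exact hx (hsupp h))]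
    rw [hcomp]
    exact hg2
  have hD2 : ∑' i : ℕ, (∑' k, gTwo q z n m i k) = ∑' s, ww q z n m s := by
    calc ∑' i : ℕ, (∑' k, gTwo q z n m i k)
        = ∑' p : ℕ × ℕ, gTwo q z n m p.1 p.2 := (Summable.tsum_prod hg2).symm
      _ = ∑' p : ℕ × ℕ, Phi q z n m (p.1 + p.2, p.2) :=
          tsum_congr fun p => gTwo_eq_Phi (q := q) (z := z) (n := n) m p
      _ = ∑' p : ℕ × ℕ, Phi q z n m p := hinj.tsum_eq (by
          intro x hx
          exact hsupp hx)
      _ = ∑' s : ℕ, ∑' k : ℕ, Phi q z n m (s, k) := Summable.tsum_prod hPhiS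
      _ = ∑' s, ww q z n m s := tsum_congr fun s => sum_Phi hq0 hq1 hn m s
  -- summability of uu, ww
  have hSwap : Summable (fun p : ℕ × ℕ => gOne q z n m p.2 p.1) := hg1.prod_symm
  have huu : Summable (uu q z n m) :=
    (hSwap.hasSum.prod_fiberwise (fun k => (hasSum_gOne hq0 hq1 hn hε hPe m k))).summable
  have hww : Summable (ww q z n m) := by
    have h := (hPhiS.hasSum.prod_fiberwise (fun s => (hPhiS.prod_factor s).hasSum)).summable
    exact h.congr (fun s => sum_Phi hq0 hq1 hn m s)
  have husucc : Summable (fun s => uu q z n m (s+1)) := (summable_nat_add_iff 1).2 huu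
  -- coefficient identities
  have hmn0 := (Pq_pos hq0 hq1 (m+n)).ne'
  have hcoeff0 : uu q z n m 0 = (q^n * q^(m*n) / (1 - q^n)) * rr q z n m 0 := by
    have hc0 : cc q n 0 = 1 := by simp [cc, qPoch, Pq]
    have hp0 : qPoch q (q ^ m) 0 = 1 := by simp [qPoch]
    simp only [uu, rr, hc0, hp0, pow_zero, Nat.add_zero, one_mul, mul_one]
    field_simp
    ring
  have hcoeffS : ∀ s : ℕ, uu q z n m (s+1) - q ^ m * ww q z n m s
      = (q^n * q^(m*n) / (1 - q^n)) * rr q z n m (s+1) := by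
    intro s
    have hek := eKey (q := q) m s
    have hd1 := (Pq_pos hq0 hq1 (m+n+(s+1))).ne'
    simp only [uu, ww, rr]
    rw [show m+s+1+n = m+n+(s+1) from by omega, hek,
      show m+(s+1) = m+s+1 from by omega]
    field_simp
    ring
  have hκ : q^n * q^(m*n) / (1 - q^n) ≠ 0 := by positivity
  have hrs : Summable (fun s => (q^n * q^(m*n) / (1 - q^n)) * rr q z n m (s+1)) :=
    (husucc.sub (hww.mul_left (q^m))).congr fun s => hcoeffS s
  have hrr1 : Summable (fun s => rr q z n m (s+1)) := (summable_mul_left_iff hκ).1 hrs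
  have hrr : Summable (rr q z n m) := (summable_nat_add_iff 1).1 hrr1
  -- RHS expansion
  have hRHS : q ^ n / qInt q n * Cq1 q m n z
      = q^n * (1-q) / (1 - q^n) * (q^(m*n) * Pq q n * ∑' j, rr q z n m j) := by
    rw [Cq1_gen hq0 hq1 m, qInt]
    simp only [rr]
    field_simp
  -- final assembly
  have hL : (∑' k, uu q z n m k) - q^m * ∑' s, ww q z n m s
      = (q^n * q^(m*n) / (1 - q^n)) * ∑' j, rr q z n m j := by
    rw [Summable.tsum_eq_zero_add huu, Summable.tsum_eq_zero_add hrr]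
    have h1 : uu q z n m 0 + (∑' s, uu q z n m (s+1)) - q^m * ∑' s, ww q z n m s
        = uu q z n m 0 + ∑' s, (uu q z n m (s+1) - q^m * ww q z n m s) := by
      rw [Summable.tsum_sub husucc (hww.mul_left (q^m)), tsum_mul_left]
      ring
    rw [h1, tsum_congr hcoeffS, tsum_mul_left, hcoeff0]
    ring
  rw [← Equiv.tsum_eq e, tsum_congr hstep1, tsum_mul_left,
    Summable.tsum_sub hG1s (hG2s.mul_left (q^m)), tsum_mul_left, hD1, hD2, hRHS, hL]
  ring
end
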